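/- arXiv:2303.09151 — 7 statements merged into one kernel-verified Lean document; each statement's English description precedes it below -/
import Mathlib

section
/- Let n ≥ 1, w > 0, A₀ > 0, σ > 0, and let s₁, …, sₙ ∈ ℝ². Then the expectation of the product of pointing losses under Gaussian beam displacement satisfies the exact identity ∫_{ℝ²} (∏_{i=1}^{n} A₀ exp(−2‖sᵢ+d‖²/w²)) · (1/(2πσ²)) exp(−‖d‖²/(2σ²)) dd = A₀ⁿ · exp(−(2/w²)∑_{i=1}^{n}‖sᵢ‖²) · ∫₀^∞ exp(−(2n/w² + 1/(2σ²))δ²) · (δ/σ²) · [(1/(2π)) ∫₀^{2π} exp(Kδ cos θ) dθ] dδ, where K = (4/w²)·‖∑_{i=1}^{n} sᵢ‖. (The inner angular integral (1/(2π))∫₀^{2π} exp(x cos θ) dθ is the modified Bessel function I₀(x).) -/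
/-! Expanding the squares, the integrand is a constant times `exp (-a ‖d‖² + ⟪(u, v), d⟫)` with
`a = 2n/w² + 1/(2σ²)` and `(u, v) = -(4/w²) ∑ sᵢ`. In polar coordinates `d = δ (cos θ, sin θ)` the
linear term is `δ (u cos θ + v sin θ) = δ ‖(u, v)‖ cos (θ - φ)`, and a shift of `θ` by `φ` over a full
period turns the angular integral into the `I₀` integral. Fubini applies because the polar integrand
is dominated by `δ exp (-a δ² + ‖(u, v)‖ δ)`. -/

open Real MeasureTheory Set

lemma integrable_mul_exp_neg_mul_sq_add {a : ℝ} (ha : 0 < a) (b : ℝ) :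
    Integrable (fun x : ℝ => x * exp (-a * x ^ 2 + b * x)) := by
  -- completing the square, the integrand is `exp (b² / 4a) (y + m) exp (-a y²)` at `y = x - m`
  set m := b / (2 * a)
  have hcentered : Integrable (fun y : ℝ => (y + m) * exp (-a * y ^ 2)) := by
    refine ((integrable_mul_exp_neg_mul_sq ha).add
      ((integrable_exp_neg_mul_sq ha).const_mul m)).congr (.of_forall fun y => ?_)
    simp only [Pi.add_apply]
    ring
  refine ((hcentered.comp_sub_right m).const_mul (exp (b ^ 2 / (4 * a)))).congr
    (.of_forall fun x => ?_)
  simp only [sub_add_cancel]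
  rw [mul_left_comm, ← exp_add]
  congr 2
  simp only [m]
  field_simp
  ring

lemma exists_mul_cos_add_mul_sin_eq (u v : ℝ) :
    ∃ φ, ∀ θ, u * cos θ + v * sin θ = √(u ^ 2 + v ^ 2) * cos (θ - φ) := by
  set z : ℂ := ⟨u, v⟩
  have hz : ‖z‖ = √(u ^ 2 + v ^ 2) := by
    rw [Complex.norm_def, Complex.normSq_mk]
    ring_nf
  refine ⟨z.arg, fun θ => ?_⟩
  rw [cos_sub, ← hz]
  linear_combination (-cos θ) * Complex.norm_mul_cos_arg z - sin θ * Complex.norm_mul_sin_arg z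

lemma mul_cos_add_mul_sin_le (u v θ : ℝ) : u * cos θ + v * sin θ ≤ √(u ^ 2 + v ^ 2) := by
  obtain ⟨φ, hφ⟩ := exists_mul_cos_add_mul_sin_eq u v
  rw [hφ]
  exact mul_le_of_le_one_right (sqrt_nonneg _) (cos_le_one _)

lemma integral_comp_mul_cos_add_mul_sin {E : Type*} [NormedAddCommGroup E] [NormedSpace ℝ E]
    (f : ℝ → E) (u v t : ℝ) :
    ∫ θ in t..t + 2 * π, f (u * cos θ + v * sin θ) =
      ∫ θ in 0..2 * π, f (√(u ^ 2 + v ^ 2) * cos θ) := by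
  obtain ⟨φ, hφ⟩ := exists_mul_cos_add_mul_sin_eq u v
  have hper : Function.Periodic (fun θ => f (√(u ^ 2 + v ^ 2) * cos θ)) (2 * π) := fun θ => by
    simp only [cos_add_two_pi]
  simp_rw [hφ]
  rw [intervalIntegral.integral_comp_sub_right (fun θ => f (√(u ^ 2 + v ^ 2) * cos θ)),
    show t + 2 * π - φ = t - φ + 2 * π by ring, hper.intervalIntegral_add_eq (t - φ) 0, zero_add]

lemma integrableOn_mul_exp_neg_mul_sq_add_mul_cos_add_mul_sin {a : ℝ} (ha : 0 < a) (u v : ℝ) :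
    IntegrableOn (fun p : ℝ × ℝ => p.1 * exp (-a * p.1 ^ 2 + p.1 * (u * cos p.2 + v * sin p.2)))
      (Ioi 0 ×ˢ Ioo (-π) π) (volume.prod volume) := by
  set r := √(u ^ 2 + v ^ 2)
  have hbound : IntegrableOn (fun p : ℝ × ℝ => p.1 * exp (-a * p.1 ^ 2 + r * p.1) * 1)
      (Ioi 0 ×ˢ Ioo (-π) π) (volume.prod volume) := by
    rw [IntegrableOn, ← Measure.prod_restrict]
    exact (integrable_mul_exp_neg_mul_sq_add ha r).integrableOn.mul_prod
      (integrableOn_const measure_Ioo_lt_top.ne)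
  refine hbound.mono' (by fun_prop) ?_
  filter_upwards [ae_restrict_mem (measurableSet_Ioi.prod measurableSet_Ioo)] with p hp
  have hδ : 0 < p.1 := hp.1
  rw [norm_of_nonneg (by positivity), mul_one]
  exact mul_le_mul_of_nonneg_left
    (exp_le_exp.2 (by nlinarith [mul_cos_add_mul_sin_le u v p.2])) hδ.le

theorem integral_exp_neg_mul_sq_add_linear {a : ℝ} (ha : 0 < a) (u v : ℝ) :
    ∫ d : ℝ × ℝ, exp (-a * (d.1 ^ 2 + d.2 ^ 2) + (u * d.1 + v * d.2)) =
      ∫ δ in Ioi 0, δ * exp (-a * δ ^ 2) *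
        ∫ θ in 0..2 * π, exp (√(u ^ 2 + v ^ 2) * δ * cos θ) := by
  have hpolar : ∀ p : ℝ × ℝ,
      p.1 • exp (-a * ((polarCoord.symm p).1 ^ 2 + (polarCoord.symm p).2 ^ 2) +
        (u * (polarCoord.symm p).1 + v * (polarCoord.symm p).2)) =
      p.1 * exp (-a * p.1 ^ 2 + p.1 * (u * cos p.2 + v * sin p.2)) := fun p => by
    rw [polarCoord_symm_apply, smul_eq_mul]
    congr 2
    linear_combination (-a * p.1 ^ 2) * sin_sq_add_cos_sq p.2
  rw [← integral_comp_polarCoord_symm, polarCoord_target]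
  simp only [hpolar]
  rw [Measure.volume_eq_prod,
    setIntegral_prod _ (integrableOn_mul_exp_neg_mul_sq_add_mul_cos_add_mul_sin ha u v)]
  refine setIntegral_congr_fun measurableSet_Ioi fun δ _ => ?_
  have hIoo : ∀ g : ℝ → ℝ, ∫ θ in Ioo (-π) π, g θ = ∫ θ in -π..-π + 2 * π, g θ := fun g => by
    rw [intervalIntegral.integral_of_le (by linarith [pi_pos]), integral_Ioc_eq_integral_Ioo]
    ring_nf
  simp only [exp_add, ← mul_assoc]
  rw [integral_const_mul, hIoo]
  congr 1
  convert integral_comp_mul_cos_add_mul_sin (fun x => exp (δ * x)) u v (-π) using 4 with θ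
  ring

lemma prod_exp_neg_sq_dist_mul_gaussian {ι : Type*} [Fintype ι] (A₀ w σ : ℝ) (s : ι → ℝ × ℝ)
    (d : ℝ × ℝ) :
    (∏ i, A₀ * exp (-(2 * (((s i).1 + d.1) ^ 2 + ((s i).2 + d.2) ^ 2)) / w ^ 2)) *
        ((1 / (2 * π * σ ^ 2)) * exp (-(d.1 ^ 2 + d.2 ^ 2) / (2 * σ ^ 2))) =
      A₀ ^ Fintype.card ι * exp (-(2 / w ^ 2) * ∑ i, ((s i).1 ^ 2 + (s i).2 ^ 2)) *
        ((1 / (2 * π * σ ^ 2)) *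
          exp (-(2 * Fintype.card ι / w ^ 2 + 1 / (2 * σ ^ 2)) * (d.1 ^ 2 + d.2 ^ 2) +
            ((-(4 / w ^ 2) * ∑ i, (s i).1) * d.1 + (-(4 / w ^ 2) * ∑ i, (s i).2) * d.2))) := by
  have hterm : ∀ i, -(2 * (((s i).1 + d.1) ^ 2 + ((s i).2 + d.2) ^ 2)) / w ^ 2 =
      -(2 / w ^ 2) * ((s i).1 ^ 2 + (s i).2 ^ 2) +
        (-(4 / w ^ 2) * d.1 * (s i).1 + -(4 / w ^ 2) * d.2 * (s i).2) +
        -(2 / w ^ 2) * (d.1 ^ 2 + d.2 ^ 2) := fun i => by ring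
  have hexponent :
      ∑ i, -(2 * (((s i).1 + d.1) ^ 2 + ((s i).2 + d.2) ^ 2)) / w ^ 2 +
          -(d.1 ^ 2 + d.2 ^ 2) / (2 * σ ^ 2) =
        -(2 / w ^ 2) * ∑ i, ((s i).1 ^ 2 + (s i).2 ^ 2) +
          (-(2 * Fintype.card ι / w ^ 2 + 1 / (2 * σ ^ 2)) * (d.1 ^ 2 + d.2 ^ 2) +
            ((-(4 / w ^ 2) * ∑ i, (s i).1) * d.1 + (-(4 / w ^ 2) * ∑ i, (s i).2) * d.2)) := by
    simp only [hterm, Finset.sum_add_distrib, ← Finset.mul_sum, Finset.sum_const,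
      Finset.card_univ, nsmul_eq_mul]
    ring
  rw [Finset.prod_mul_distrib, Finset.prod_const, Finset.card_univ, ← exp_sum]
  calc _ = A₀ ^ Fintype.card ι * (1 / (2 * π * σ ^ 2)) *
        exp (∑ i, -(2 * (((s i).1 + d.1) ^ 2 + ((s i).2 + d.2) ^ 2)) / w ^ 2 +
          -(d.1 ^ 2 + d.2 ^ 2) / (2 * σ ^ 2)) := by rw [exp_add]; ring
    _ = _ := by rw [hexponent, exp_add]; ring

theorem exact_joint_pointing_loss_moment_general
    (n : ℕ) (w A₀ σ : ℝ) (hσ : 0 < σ)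
    (s : Fin n → ℝ × ℝ)
    (K : ℝ)
    (hK : K = (4 / w ^ 2) * Real.sqrt ((∑ i, (s i).1) ^ 2 + (∑ i, (s i).2) ^ 2)) :
    (∫ d : ℝ × ℝ,
        (∏ i, A₀ * Real.exp (-(2 * (((s i).1 + d.1) ^ 2 + ((s i).2 + d.2) ^ 2)) / w ^ 2)) *
          ((1 / (2 * π * σ ^ 2)) * Real.exp (-(d.1 ^ 2 + d.2 ^ 2) / (2 * σ ^ 2)))) =
      A₀ ^ n * Real.exp (-(2 / w ^ 2) * ∑ i, ((s i).1 ^ 2 + (s i).2 ^ 2)) *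
        ∫ δ in Set.Ioi (0 : ℝ),
          Real.exp (-((2 * n / w ^ 2 + 1 / (2 * σ ^ 2)) * δ ^ 2)) * (δ / σ ^ 2) *
            ((1 / (2 * π)) * ∫ θ in (0 : ℝ)..(2 * π), Real.exp (K * δ * Real.cos θ)) := by
  have ha : 0 < 2 * (n : ℝ) / w ^ 2 + 1 / (2 * σ ^ 2) := by positivity
  have hK' : √((-(4 / w ^ 2) * ∑ i, (s i).1) ^ 2 + (-(4 / w ^ 2) * ∑ i, (s i).2) ^ 2) = K := by
    rw [hK, mul_pow, mul_pow, neg_sq, ← mul_add, sqrt_mul (sq_nonneg _),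
      sqrt_sq (by positivity)]
  simp only [prod_exp_neg_sq_dist_mul_gaussian, Fintype.card_fin]
  rw [integral_const_mul, integral_const_mul, integral_exp_neg_mul_sq_add_linear ha, hK',
    ← integral_const_mul]
  congr 1
  refine setIntegral_congr_fun measurableSet_Ioi fun δ _ => ?_
  ring_nf

/-- Exact joint moment of pointing losses under Gaussian beam displacement
(Theorem 1 of the paper): the expectation of a product of `n` Gaussian-beam
pointing losses equals a radial Bessel-type integral. -/
theorem exact_joint_pointing_loss_moment
    (n : ℕ) (hn : 1 ≤ n) (w A₀ σ : ℝ) (hw : 0 < w) (hA : 0 < A₀) (hσ : 0 < σ)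
    (s : Fin n → ℝ × ℝ)
    (K : ℝ)
    (hK : K = (4 / w ^ 2) * Real.sqrt ((∑ i, (s i).1) ^ 2 + (∑ i, (s i).2) ^ 2)) :
    (∫ d : ℝ × ℝ,
        (∏ i, A₀ * Real.exp (-(2 * (((s i).1 + d.1) ^ 2 + ((s i).2 + d.2) ^ 2)) / w ^ 2)) *
          ((1 / (2 * π * σ ^ 2)) * Real.exp (-(d.1 ^ 2 + d.2 ^ 2) / (2 * σ ^ 2)))) =
      A₀ ^ n * Real.exp (-(2 / w ^ 2) * ∑ i, ((s i).1 ^ 2 + (s i).2 ^ 2)) *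
        ∫ δ in Set.Ioi (0 : ℝ),
          Real.exp (-((2 * n / w ^ 2 + 1 / (2 * σ ^ 2)) * δ ^ 2)) * (δ / σ ^ 2) *
            ((1 / (2 * π)) * ∫ θ in (0 : ℝ)..(2 * π), Real.exp (K * δ * Real.cos θ)) :=
  exact_joint_pointing_loss_moment_general n w A₀ σ hσ s K hK
end

section
/- Let w > 0, A₀ > 0, σ > 0 and s ∈ ℝ², and let d ∈ ℝ² have the centered bivariate Gaussian density g(d) = (1/(2πσ²))·exp(−‖d‖²/(2σ²)). Define the pointing loss Z = A₀·exp(−2‖s+d‖²/w²). Then for every z₀ with 0 < z₀ ≤ A₀, the probability ∫_{{d ∈ ℝ² : A₀ exp(−2‖s+d‖²/w²) ≤ z₀}} g(d) dd equals ∫₀^{z₀} (w²/(4σ²)) · (1/z) · (z/A₀)^{w²/(4σ²)} · exp(−‖s‖²/(2σ²)) · [(1/(2π)) ∫₀^{2π} exp((‖s‖/σ²)·√(−(w²/2)·ln(z/A₀)) · cos θ) dθ] dz; that is, Z has probability density f_Z(z) = (w²/(4σ²))·(1/z)·(z/A₀)^{w²/(4σ²)}·e^{−‖s‖²/(2σ²)}·I₀((‖s‖/σ²)√(−(w²/2)ln(z/A₀)))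 on 0 ≤ z ≤ A₀. -/
/-!
Put `u = s + d`. Writing `z₀ = A₀ exp (-2R²/w²)`, the event `Z ≤ z₀` is `‖u‖ ≥ R`, and `u` has the
Gaussian density centred at `s`. In polar coordinates `u = r (cos θ, sin θ)` the exponent splits
into a radial part and `(r/σ²) (s₁ cos θ + s₂ sin θ)`; rotating `θ` by `arg s` turns the angular
integral into `2π I₀ (r ‖s‖/σ²)`. Finally `z = A₀ exp (-2r²/w²)` maps `(R, ∞)` onto `(0, z₀)`
with `|dz/dr| = (4r/w²) z`, and this substitution turns the radial integral into `∫₀^{z₀} f_Z`.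
-/

open Real MeasureTheory Set

theorem intervalIntegral_comp_mul_cos_add_mul_sin (f : ℝ → ℝ) (p q : ℝ) :
    ∫ θ in (-π)..π, f (p * cos θ + q * sin θ) =
      ∫ θ in (0 : ℝ)..(2 * π), f (√(p ^ 2 + q ^ 2) * cos θ) := by
  set z : ℂ := ⟨p, q⟩
  have hnorm : ‖z‖ = √(p ^ 2 + q ^ 2) := by
    rw [Complex.norm_def, Complex.normSq_apply]; ring_nf; rfl
  have hre : ‖z‖ * cos z.arg = p := Complex.norm_mul_cos_arg z
  have him : ‖z‖ * sin z.arg = q := Complex.norm_mul_sin_arg z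
  have hrot : ∀ θ, p * cos θ + q * sin θ = ‖z‖ * cos (θ - z.arg) := fun θ => by
    rw [cos_sub]
    linear_combination (-cos θ) * hre + (-sin θ) * him
  have hper : Function.Periodic (fun θ => f (‖z‖ * cos θ)) (2 * π) := fun θ => by
    simp only [cos_add_two_pi]
  simp_rw [hrot, intervalIntegral.integral_comp_sub_right (fun θ => f (‖z‖ * cos θ)), ← hnorm]
  have h := hper.intervalIntegral_add_eq (-π - z.arg) 0
  rwa [zero_add, show -π - z.arg + 2 * π = π - z.arg by ring] at h

theorem integrableOn_polarCoord_target {E : Type*} [NormedAddCommGroup E] [NormedSpace ℝ E]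
    {f : ℝ × ℝ → E} (hf : Integrable f) :
    IntegrableOn (fun p : ℝ × ℝ => p.1 • f (polarCoord.symm p)) polarCoord.target := by
  have h := (integrableOn_image_iff_integrableOn_abs_det_fderiv_smul volume
    polarCoord.open_target.measurableSet
    (fun p _ => (hasFDerivAt_polarCoord_symm p).hasFDerivWithinAt)
    polarCoord.symm.injOn f).mp
  rw [polarCoord.symm_image_target_eq_source] at h
  refine (h hf.integrableOn).congr_fun (fun p hp => ?_) polarCoord.open_target.measurableSet
  dsimp only
  rw [det_fderivPolarCoordSymm, abs_of_pos hp.1]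

theorem integral_eq_integral_polar {E : Type*} [NormedAddCommGroup E] [NormedSpace ℝ E]
    {f : ℝ × ℝ → E} (hf : Integrable f) :
    ∫ u, f u = ∫ r in Ioi 0, ∫ θ in Ioo (-π) π, r • f (r * cos θ, r * sin θ) := by
  rw [← integral_comp_polarCoord_symm]
  have h := integrableOn_polarCoord_target hf
  rw [polarCoord_target, Measure.volume_eq_prod] at h ⊢
  exact setIntegral_prod _ h

theorem setIntegral_outside_disk_eq_integral_polar {E : Type*} [NormedAddCommGroup E]
    [NormedSpace ℝ E] {f : ℝ × ℝ → E} (hf : Integrable f) {R : ℝ} (hR : 0 ≤ R) :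
    ∫ u in {u : ℝ × ℝ | R ^ 2 ≤ u.1 ^ 2 + u.2 ^ 2}, f u =
      ∫ r in Ioi R, ∫ θ in Ioo (-π) π, r • f (r * cos θ, r * sin θ) := by
  have hmeas : MeasurableSet {u : ℝ × ℝ | R ^ 2 ≤ u.1 ^ 2 + u.2 ^ 2} :=
    measurableSet_le measurable_const (by fun_prop)
  have hcircle : ∀ r, 0 < r → ∀ θ,
      (r * cos θ, r * sin θ) ∈ {u : ℝ × ℝ | R ^ 2 ≤ u.1 ^ 2 + u.2 ^ 2} ↔ r ∈ Ici R := by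
    intro r hr θ
    rw [mem_ofPred_eq, show (r * cos θ) ^ 2 + (r * sin θ) ^ 2 = r ^ 2 by
      linear_combination r ^ 2 * sin_sq_add_cos_sq θ, mem_Ici, sq_le_sq₀ hR hr.le]
  rw [← integral_indicator hmeas, integral_eq_integral_polar (hf.indicator hmeas)]
  calc
    _ = ∫ r in Ioi 0, (Ici R).indicator
          (fun r => ∫ θ in Ioo (-π) π, r • f (r * cos θ, r * sin θ)) r := by
      refine setIntegral_congr_fun measurableSet_Ioi fun r hr => ?_
      by_cases hRr : r ∈ Ici R
      · simp only [indicator_of_mem hRr, indicator_of_mem ((hcircle r hr _).mpr hRr)]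
      · simp only [indicator_of_notMem hRr,
          indicator_of_notMem (fun h => hRr ((hcircle r hr _).mp h)), smul_zero, integral_zero]
    _ = ∫ r in Ioi 0, (Ioi R).indicator
          (fun r => ∫ θ in Ioo (-π) π, r • f (r * cos θ, r * sin θ)) r :=
      integral_congr_ae (ae_restrict_of_ae (indicator_ae_eq_of_ae_eq_set Ioi_ae_eq_Ici.symm))
    _ = _ := by rw [setIntegral_indicator measurableSet_Ioi, Ioi_inter_Ioi, max_eq_right hR]

theorem setIntegral_preimage_add_left {G E : Type*} [MeasurableSpace G] [AddCommGroup G]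
    [MeasurableAdd G] [NormedAddCommGroup E] [NormedSpace ℝ E] (μ : Measure G)
    [μ.IsAddLeftInvariant] (f : G → E) (s : G) (S : Set G) :
    ∫ d in (s + ·) ⁻¹' S, f d ∂μ = ∫ u in S, f (u - s) ∂μ := by
  simpa only [add_sub_cancel_left] using (measurePreserving_add_left μ s).setIntegral_preimage_emb
    (measurableEmbedding_addLeft s) (fun u => f (u - s)) S

theorem integrable_exp_neg_sq_add_sq_div {σ : ℝ} (hσ : σ ≠ 0) :
    Integrable fun d : ℝ × ℝ => exp (-(d.1 ^ 2 + d.2 ^ 2) / (2 * σ ^ 2)) := by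
  have hb : 0 < 1 / (2 * σ ^ 2) := by positivity
  have h := (integrable_exp_neg_mul_sq hb).mul_prod (integrable_exp_neg_mul_sq hb)
  refine h.congr (ae_of_all _ fun d => ?_)
  simp only [← exp_add]
  ring_nf

theorem integral_exp_gaussian_circle {r : ℝ} (hr : 0 ≤ r) (σ : ℝ) (a : ℝ × ℝ) :
    ∫ θ in Ioo (-π) π, exp (-((r * cos θ - a.1) ^ 2 + (r * sin θ - a.2) ^ 2) / (2 * σ ^ 2)) =
      exp (-(r ^ 2 + (a.1 ^ 2 + a.2 ^ 2)) / (2 * σ ^ 2)) *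
        ∫ θ in (0 : ℝ)..(2 * π), exp (r * √(a.1 ^ 2 + a.2 ^ 2) / σ ^ 2 * cos θ) := by
  have hsplit : ∀ θ, -((r * cos θ - a.1) ^ 2 + (r * sin θ - a.2) ^ 2) / (2 * σ ^ 2) =
      -(r ^ 2 + (a.1 ^ 2 + a.2 ^ 2)) / (2 * σ ^ 2) +
        (r * a.1 / σ ^ 2 * cos θ + r * a.2 / σ ^ 2 * sin θ) := fun θ => by
    linear_combination (-r ^ 2 / (2 * σ ^ 2)) * sin_sq_add_cos_sq θ
  have hnorm : √((r * a.1 / σ ^ 2) ^ 2 + (r * a.2 / σ ^ 2) ^ 2) =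
      r * √(a.1 ^ 2 + a.2 ^ 2) / σ ^ 2 := by
    rw [show (r * a.1 / σ ^ 2) ^ 2 + (r * a.2 / σ ^ 2) ^ 2 =
        (r / σ ^ 2) ^ 2 * (a.1 ^ 2 + a.2 ^ 2) by ring,
      sqrt_mul (sq_nonneg _), sqrt_sq (by positivity)]
    ring
  simp_rw [hsplit, exp_add (-(r ^ 2 + (a.1 ^ 2 + a.2 ^ 2)) / (2 * σ ^ 2))]
  rw [integral_const_mul, ← integral_Ioc_eq_integral_Ioo,
    ← intervalIntegral.integral_of_le (by linarith [pi_pos]),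
    intervalIntegral_comp_mul_cos_add_mul_sin exp, hnorm]

noncomputable section

/-- The loss `Z` as a function of the radius `‖s + d‖`. -/
def gaussianProfile (A₀ w r : ℝ) : ℝ := A₀ * exp (-(2 * r ^ 2) / w ^ 2)

/-- The integrand `f_Z` of the statement. -/
def pointingLossDensity (w A₀ σ : ℝ) (s : ℝ × ℝ) (z : ℝ) : ℝ :=
  (w ^ 2 / (4 * σ ^ 2)) * (1 / z) * (z / A₀) ^ (w ^ 2 / (4 * σ ^ 2)) *
    Real.exp (-(s.1 ^ 2 + s.2 ^ 2) / (2 * σ ^ 2)) *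
      ((1 / (2 * π)) * ∫ θ in (0 : ℝ)..(2 * π),
        Real.exp ((Real.sqrt (s.1 ^ 2 + s.2 ^ 2) / σ ^ 2) *
          Real.sqrt (-(w ^ 2 / 2) * Real.log (z / A₀)) * Real.cos θ))

end

theorem hasDerivAt_gaussianProfile (A₀ w r : ℝ) :
    HasDerivAt (gaussianProfile A₀ w) (-(4 * r / w ^ 2) * gaussianProfile A₀ w r) r := by
  have h := (((hasDerivAt_pow 2 r).const_mul 2).neg.div_const (w ^ 2)).exp.const_mul A₀
  refine h.congr_deriv ?_
  simp only [gaussianProfile, Pi.neg_apply]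
  push_cast
  ring

theorem gaussianProfile_pos {A₀ : ℝ} (hA : 0 < A₀) (w r : ℝ) : 0 < gaussianProfile A₀ w r :=
  mul_pos hA (exp_pos _)

theorem gaussianProfile_zero (A₀ w : ℝ) : gaussianProfile A₀ w 0 = A₀ := by
  simp [gaussianProfile]

theorem gaussianProfile_lt_gaussianProfile_iff {A₀ w : ℝ} (hA : 0 < A₀) (hw : w ≠ 0) {r r' : ℝ} :
    gaussianProfile A₀ w r < gaussianProfile A₀ w r' ↔ r' ^ 2 < r ^ 2 := by
  rw [gaussianProfile, gaussianProfile, mul_lt_mul_iff_of_pos_left hA, exp_lt_exp,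
    div_lt_div_iff_of_pos_right (by positivity)]
  constructor <;> intro h <;> linarith

theorem strictAntiOn_gaussianProfile {A₀ w : ℝ} (hA : 0 < A₀) (hw : w ≠ 0) :
    StrictAntiOn (gaussianProfile A₀ w) (Ici 0) := fun _ hr _ _ hrr' =>
  (gaussianProfile_lt_gaussianProfile_iff hA hw).mpr (pow_lt_pow_left₀ hrr' hr two_ne_zero)

theorem log_gaussianProfile_div {A₀ : ℝ} (hA : A₀ ≠ 0) (w r : ℝ) :
    log (gaussianProfile A₀ w r / A₀) = -(2 * r ^ 2) / w ^ 2 := by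
  rw [gaussianProfile, mul_div_cancel_left₀ _ hA, log_exp]

theorem exists_gaussianProfile_eq {A₀ w : ℝ} (hA : 0 < A₀) (hw : w ≠ 0) {z : ℝ} (hz : 0 < z)
    (hzA : z ≤ A₀) : ∃ R, 0 ≤ R ∧ gaussianProfile A₀ w R = z := by
  have hlog : 0 ≤ w ^ 2 / 2 * log (A₀ / z) :=
    mul_nonneg (by positivity) (log_nonneg ((one_le_div hz).mpr hzA))
  refine ⟨√(w ^ 2 / 2 * log (A₀ / z)), sqrt_nonneg _, ?_⟩
  rw [gaussianProfile, sq_sqrt hlog, log_div hA.ne' hz.ne',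
    show -(2 * (w ^ 2 / 2 * (log A₀ - log z))) / w ^ 2 = log z - log A₀ by field_simp; ring,
    exp_sub, exp_log hz, exp_log hA]
  field_simp

theorem gaussianProfile_image_Ioi {A₀ w : ℝ} (hA : 0 < A₀) (hw : w ≠ 0) {R : ℝ} (hR : 0 ≤ R) :
    gaussianProfile A₀ w '' Ioi R = Ioo 0 (gaussianProfile A₀ w R) := by
  ext z
  constructor
  · rintro ⟨r, hr, rfl⟩
    exact ⟨gaussianProfile_pos hA w r,
      strictAntiOn_gaussianProfile hA hw hR (hR.trans (le_of_lt hr)) hr⟩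
  · rintro ⟨hz, hzR⟩
    have hzA : z ≤ A₀ := by
      rw [← gaussianProfile_zero A₀ w]
      exact hzR.le.trans
        ((strictAntiOn_gaussianProfile hA hw).antitoneOn (mem_Ici.mpr le_rfl) hR hR)
    obtain ⟨r, hr, rfl⟩ := exists_gaussianProfile_eq hA hw hz hzA
    exact ⟨r, (pow_lt_pow_iff_left₀ hR hr two_ne_zero).mp
      ((gaussianProfile_lt_gaussianProfile_iff hA hw).mp hzR), rfl⟩

theorem setIntegral_Ioo_gaussianProfile {E : Type*} [NormedAddCommGroup E] [NormedSpace ℝ E]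
    {A₀ w : ℝ} (hA : 0 < A₀) (hw : w ≠ 0) {R : ℝ} (hR : 0 ≤ R) (g : ℝ → E) :
    ∫ z in Ioo 0 (gaussianProfile A₀ w R), g z =
      ∫ r in Ioi R, |-(4 * r / w ^ 2) * gaussianProfile A₀ w r| • g (gaussianProfile A₀ w r) := by
  rw [← gaussianProfile_image_Ioi hA hw hR]
  exact integral_image_eq_integral_abs_deriv_smul measurableSet_Ioi
    (fun r _ => (hasDerivAt_gaussianProfile A₀ w r).hasDerivWithinAt)
    ((strictAntiOn_gaussianProfile hA hw).injOn.mono fun r hr => hR.trans (le_of_lt hr)) g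

theorem abs_deriv_mul_pointingLossDensity_gaussianProfile {w A₀ σ r : ℝ} (hw : w ≠ 0)
    (hA : 0 < A₀) (hr : 0 ≤ r) (s : ℝ × ℝ) :
    |-(4 * r / w ^ 2) * gaussianProfile A₀ w r| *
        pointingLossDensity w A₀ σ s (gaussianProfile A₀ w r) =
      r * (1 / (2 * π * σ ^ 2) * (exp (-(r ^ 2 + (s.1 ^ 2 + s.2 ^ 2)) / (2 * σ ^ 2)) *
        ∫ θ in (0 : ℝ)..(2 * π), exp (r * √(s.1 ^ 2 + s.2 ^ 2) / σ ^ 2 * cos θ))) := by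
  have hsqrt : √(-(w ^ 2 / 2) * log (gaussianProfile A₀ w r / A₀)) = r := by
    rw [log_gaussianProfile_div hA.ne', show -(w ^ 2 / 2) * (-(2 * r ^ 2) / w ^ 2) = r ^ 2 by
      field_simp, sqrt_sq hr]
  have hpow : (gaussianProfile A₀ w r / A₀) ^ (w ^ 2 / (4 * σ ^ 2)) =
      exp (-r ^ 2 / (2 * σ ^ 2)) := by
    rw [gaussianProfile, mul_div_cancel_left₀ _ hA.ne', ← exp_mul]
    congr 1
    field_simp
    ring
  have hint : ∫ θ in (0 : ℝ)..(2 * π), exp (√(s.1 ^ 2 + s.2 ^ 2) / σ ^ 2 * r * cos θ) =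
      ∫ θ in (0 : ℝ)..(2 * π), exp (r * √(s.1 ^ 2 + s.2 ^ 2) / σ ^ 2 * cos θ) := by
    simp only [div_mul_eq_mul_div, mul_comm r]
  have hexp : exp (-(r ^ 2 + (s.1 ^ 2 + s.2 ^ 2)) / (2 * σ ^ 2)) =
      exp (-r ^ 2 / (2 * σ ^ 2)) * exp (-(s.1 ^ 2 + s.2 ^ 2) / (2 * σ ^ 2)) := by
    rw [← exp_add]; ring_nf
  have hφ := gaussianProfile_pos hA w r
  rw [pointingLossDensity, hsqrt, hpow, hint, hexp, abs_mul, abs_neg,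
    abs_of_nonneg (by positivity : 0 ≤ 4 * r / w ^ 2), abs_of_pos hφ]
  field_simp

theorem setOf_mul_exp_le_gaussianProfile {A₀ w : ℝ} (hA : 0 < A₀) (hw : w ≠ 0) (s : ℝ × ℝ)
    (R : ℝ) :
    {d : ℝ × ℝ | A₀ * exp (-(2 * ((s.1 + d.1) ^ 2 + (s.2 + d.2) ^ 2)) / w ^ 2) ≤
        gaussianProfile A₀ w R} = (s + ·) ⁻¹' {u : ℝ × ℝ | R ^ 2 ≤ u.1 ^ 2 + u.2 ^ 2} := by
  ext d
  rw [mem_ofPred_eq, mem_preimage, mem_ofPred_eq, Prod.fst_add, Prod.snd_add, gaussianProfile,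
    mul_le_mul_iff_of_pos_left hA, exp_le_exp, div_le_div_iff_of_pos_right (by positivity)]
  constructor <;> intro h <;> linarith

/-- The pointing loss `Z = A₀ exp(-2‖s+d‖²/w²)` of a corner-cube reflector with
boresight displacement `s`, under a centered Gaussian beam displacement `d`, has
the Rician-type density of eq. (16) of the paper. -/
theorem pointing_loss_density
    (w A₀ σ : ℝ) (hw : 0 < w) (hA : 0 < A₀) (hσ : 0 < σ) (s : ℝ × ℝ)
    (z₀ : ℝ) (hz₀ : 0 < z₀) (hz₀A : z₀ ≤ A₀) :
    (∫ d in {d : ℝ × ℝ |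
        A₀ * Real.exp (-(2 * ((s.1 + d.1) ^ 2 + (s.2 + d.2) ^ 2)) / w ^ 2) ≤ z₀},
        (1 / (2 * π * σ ^ 2)) * Real.exp (-(d.1 ^ 2 + d.2 ^ 2) / (2 * σ ^ 2))) =
      ∫ z in (0 : ℝ)..z₀,
        (w ^ 2 / (4 * σ ^ 2)) * (1 / z) * (z / A₀) ^ (w ^ 2 / (4 * σ ^ 2)) *
          Real.exp (-(s.1 ^ 2 + s.2 ^ 2) / (2 * σ ^ 2)) *
            ((1 / (2 * π)) * ∫ θ in (0 : ℝ)..(2 * π),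
              Real.exp ((Real.sqrt (s.1 ^ 2 + s.2 ^ 2) / σ ^ 2) *
                Real.sqrt (-(w ^ 2 / 2) * Real.log (z / A₀)) * Real.cos θ)) := by
  obtain ⟨R, hR, rfl⟩ := exists_gaussianProfile_eq hA hw.ne' hz₀ hz₀A
  have hg := (integrable_exp_neg_sq_add_sq_div hσ.ne').const_mul (1 / (2 * π * σ ^ 2))
  change _ = ∫ z in (0 : ℝ)..gaussianProfile A₀ w R, pointingLossDensity w A₀ σ s z
  rw [setOf_mul_exp_le_gaussianProfile hA hw.ne', setIntegral_preimage_add_left,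
    setIntegral_outside_disk_eq_integral_polar (hg.comp_sub_right s) hR,
    intervalIntegral.integral_of_le (gaussianProfile_pos hA w R).le,
    integral_Ioc_eq_integral_Ioo, setIntegral_Ioo_gaussianProfile hA hw.ne' hR]
  refine setIntegral_congr_fun measurableSet_Ioi fun r hr => ?_
  have hr0 : 0 ≤ r := hR.trans (le_of_lt hr)
  simp only [smul_eq_mul, Prod.fst_sub, Prod.snd_sub, integral_const_mul,
    integral_exp_gaussian_circle hr0,
    abs_deriv_mul_pointingLossDensity_gaussianProfile hw.ne' hA hr0]
end

section
/- Let ℓ ≥ 1 and let η₁, …, η_{2ℓ} ∈ ℝ. Then ∫₀^{2π} ∏_{i=1}^{2ℓ} cos(θ − ηᵢ) dθ = (2π / (2^{2ℓ} (ℓ!)²)) · ∑_{π ∈ S_{2ℓ}} cos(∑_{j=1}^{ℓ} (η_{π(j)} − η_{π(ℓ+j)})), where the sum runs over all permutations π of {1, 2, …, 2ℓ}. -/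
/-!
Expanding `cos x = (exp (x I) + exp (-x I)) / 2` turns `∏ᵢ cos (θ - ηᵢ)` into
`2⁻ⁿ ∑ₜ cos ((#t - #tᶜ) θ - (∑_{i ∈ t} ηᵢ - ∑_{i ∉ t} ηᵢ))`, summed over all subsets `t`; over a
full period only the balanced subsets, `#t = ℓ`, survive. On the other side, a permutation `e`
contributes exactly the phase combination of `t = e {1, …, ℓ}`, and each `t` with `#t = ℓ` is hit
by `(ℓ!)²` permutations.
-/

open Finset Real
open scoped Nat

section Trigonometric

variable {ι : Type*} [Fintype ι] [DecidableEq ι]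

theorem Complex.prod_cos_eq_sum_exp (z : ι → ℂ) :
    ∏ i, Complex.cos (z i) =
      (∑ t : Finset ι, Complex.exp ((∑ i ∈ t, z i - ∑ i ∈ tᶜ, z i) * Complex.I)) /
        2 ^ Fintype.card ι := by
  have hcos (i : ι) : Complex.cos (z i) =
      (Complex.exp (z i * Complex.I) + Complex.exp (-z i * Complex.I)) / 2 := by
    rw [← Complex.two_cos]; ring
  simp_rw [hcos, prod_div_distrib, Fintype.prod_add, prod_const, card_univ,
    ← Complex.exp_sum, ← Complex.exp_add]
  congr! 3 with t
  rw [sub_mul, sum_mul, sum_mul, sub_eq_add_neg, ← sum_neg_distrib]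
  simp only [neg_mul]

theorem Real.prod_cos_eq_sum_cos (x : ι → ℝ) :
    ∏ i, cos (x i) = (∑ t : Finset ι, cos (∑ i ∈ t, x i - ∑ i ∈ tᶜ, x i)) / 2 ^ Fintype.card ι := by
  have h := congrArg Complex.re (Complex.prod_cos_eq_sum_exp fun i => (x i : ℂ))
  simp_rw [← Complex.ofReal_cos, ← Complex.ofReal_prod, Complex.ofReal_re, ← Complex.ofReal_sum,
    ← Complex.ofReal_sub] at h
  rw [h, ← Complex.ofReal_ofNat, ← Complex.ofReal_pow, Complex.div_ofReal_re, Complex.re_sum]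
  simp_rw [Complex.exp_ofReal_mul_I_re]

theorem integral_cos_int_mul_sub (k : ℤ) (c : ℝ) :
    ∫ θ in (0 : ℝ)..2 * π, cos (k * θ - c) = if k = 0 then 2 * π * cos c else 0 := by
  split_ifs with hk
  · simp [hk]
  · have hk' : (k : ℝ) ≠ 0 := Int.cast_ne_zero.mpr hk
    rw [intervalIntegral.integral_comp_mul_sub _ hk', integral_cos, mul_zero, zero_sub,
      sin_int_mul_two_pi_sub, sin_neg, sub_self, smul_zero]

theorem integral_prod_cos_sub (η : ι → ℝ) :
    ∫ θ in (0 : ℝ)..2 * π, ∏ i, cos (θ - η i) =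
      2 * π / 2 ^ Fintype.card ι * ∑ t with #t = #tᶜ, cos (∑ i ∈ t, η i - ∑ i ∈ tᶜ, η i) := by
  have hphase (t : Finset ι) (θ : ℝ) :
      ∑ i ∈ t, (θ - η i) - ∑ i ∈ tᶜ, (θ - η i) =
        ((#t - #tᶜ : ℤ) : ℝ) * θ - (∑ i ∈ t, η i - ∑ i ∈ tᶜ, η i) := by
    simp only [sum_sub_distrib, sum_const, nsmul_eq_mul]
    push_cast
    ring
  simp_rw [Real.prod_cos_eq_sum_cos, hphase, intervalIntegral.integral_div]
  rw [intervalIntegral.integral_finsetSum fun t _ =>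
    (by fun_prop : Continuous _).intervalIntegrable _ _]
  simp_rw [integral_cos_int_mul_sub, sub_eq_zero, Nat.cast_inj, ← sum_filter]
  rw [sum_div, mul_sum]
  exact sum_congr rfl fun t _ => by ring

end Trigonometric

namespace Equiv

variable {α : Type*} {p q : α → Prop} [DecidablePred p] [DecidablePred q]

def permSubtypeCongrEquiv :
    {e : Perm α // ∀ a, p a ↔ q (e a)} ≃
      ({a // p a} ≃ {a // q a}) × ({a // ¬p a} ≃ {a // ¬q a}) where
  toFun e := (e.1.subtypeEquiv e.2, e.1.subtypeEquiv fun a => not_congr (e.2 a))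
  invFun f := ⟨subtypeCongr f.1 f.2, fun a => by
    by_cases ha : p a
    · simpa [ha, subtypeCongr, sumCompl_symm_apply_of_pos ha] using (f.1 ⟨a, ha⟩).2
    · simpa [ha, subtypeCongr, sumCompl_symm_apply_of_neg ha] using (f.2 ⟨a, ha⟩).2⟩
  left_inv e := by
    ext a
    by_cases ha : p a <;>
      simp [ha, subtypeCongr, sumCompl_symm_apply_of_pos, sumCompl_symm_apply_of_neg]
  right_inv f := by
    ext a <;> simp [subtypeCongr, sumCompl_symm_apply_of_pos, sumCompl_symm_apply_of_neg, a.2]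

end Equiv

theorem Finset.map_perm_eq_iff {α : Type*} {e : Equiv.Perm α} {s t : Finset α} :
    s.map e.toEmbedding = t ↔ ∀ a, a ∈ s ↔ e a ∈ t := by
  rw [Finset.ext_iff, ← e.forall_congr_right]
  simp

section PermFinsetMap

variable {α : Type*} [Fintype α] [DecidableEq α]

theorem card_perm_map_eq {s t : Finset α} (h : #t = #s) :
    #{e : Equiv.Perm α | s.map e.toEmbedding = t} = (#s)! * (Fintype.card α - #s)! := by
  simp_rw [map_perm_eq_iff]
  rw [← Fintype.card_subtype, Fintype.card_congr Equiv.permSubtypeCongrEquiv, Fintype.card_prod,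
    Fintype.card_equiv (Fintype.equivOfCardEq _), Fintype.card_equiv (Fintype.equivOfCardEq _)]
  · simp
  · simp [Fintype.card_subtype_compl, h]
  · simp [h]

theorem sum_perm_map_eq {M : Type*} [AddCommMonoid M] (s : Finset α) (G : Finset α → M) :
    ∑ e : Equiv.Perm α, G (s.map e.toEmbedding) =
      ((#s)! * (Fintype.card α - #s)!) • ∑ t ∈ powersetCard #s univ, G t := by
  rw [← sum_fiberwise_of_maps_to (t := powersetCard #s univ)
    (g := fun e => s.map e.toEmbedding) (by simp), smul_sum]
  refine sum_congr rfl fun t ht => ?_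
  rw [sum_congr rfl fun e he => congrArg G (mem_filter.mp he).2, sum_const,
    card_perm_map_eq (mem_powersetCard_univ.mp ht)]

end PermFinsetMap

theorem sum_castAdd_sub_sum_natAdd {m n : ℕ} (e : Equiv.Perm (Fin (m + n))) (η : Fin (m + n) → ℝ) :
    ∑ j, η (e (Fin.castAdd n j)) - ∑ j, η (e (Fin.natAdd m j)) =
      ∑ i ∈ (univ.map (Fin.castAddEmb n)).map e.toEmbedding, η i -
        ∑ i ∈ ((univ.map (Fin.castAddEmb n)).map e.toEmbedding)ᶜ, η i := by
  set t := (univ.map (Fin.castAddEmb n)).map e.toEmbedding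
  have ht : ∑ i ∈ t, η i = ∑ j, η (e (Fin.castAdd n j)) := by simp [t, sum_map]
  have huniv : ∑ i ∈ tᶜ, η i + ∑ i ∈ t, η i =
      ∑ j, η (e (Fin.castAdd n j)) + ∑ j, η (e (Fin.natAdd m j)) := by
    rw [sum_compl_add_sum, ← Equiv.sum_comp e, Fin.sum_univ_add]
  linarith

theorem integral_prod_cos_even_general
    (ℓ : ℕ) (η : Fin (ℓ + ℓ) → ℝ) :
    (∫ θ in (0 : ℝ)..(2 * π), ∏ i, Real.cos (θ - η i)) =
      (2 * π / (2 ^ (2 * ℓ) * ((ℓ.factorial : ℝ)) ^ 2)) *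
        ∑ e : Equiv.Perm (Fin (ℓ + ℓ)),
          Real.cos (∑ j : Fin ℓ, (η (e (Fin.castAdd ℓ j)) - η (e (Fin.natAdd ℓ j)))) := by
  have hbalanced :
      ({t | #t = #tᶜ} : Finset (Finset (Fin (ℓ + ℓ)))) = powersetCard ℓ univ := by
    ext t
    simp only [mem_filter, mem_univ, true_and, mem_powersetCard_univ, card_compl, Fintype.card_fin]
    omega
  have hperm : ∑ e : Equiv.Perm (Fin (ℓ + ℓ)),
        cos (∑ j, (η (e (Fin.castAdd ℓ j)) - η (e (Fin.natAdd ℓ j)))) =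
      (ℓ ! * ℓ !) • ∑ t ∈ powersetCard ℓ univ, cos (∑ i ∈ t, η i - ∑ i ∈ tᶜ, η i) := by
    simp_rw [sum_sub_distrib, sum_castAdd_sub_sum_natAdd]
    rw [sum_perm_map_eq _ fun t => cos (∑ i ∈ t, η i - ∑ i ∈ tᶜ, η i)]
    simp
  rw [integral_prod_cos_sub, hbalanced, hperm, nsmul_eq_mul, Fintype.card_fin, two_mul ℓ]
  push_cast
  field_simp

/-- The full-period integral of a product of `2ℓ` cosines of common frequency
with arbitrary phases equals a symmetrized sum of cosines of signed phase
combinations (eq. (32) of the paper). -/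
theorem integral_prod_cos_even
    (ℓ : ℕ) (hℓ : 1 ≤ ℓ) (η : Fin (ℓ + ℓ) → ℝ) :
    (∫ θ in (0 : ℝ)..(2 * π), ∏ i, Real.cos (θ - η i)) =
      (2 * π / (2 ^ (2 * ℓ) * ((ℓ.factorial : ℝ)) ^ 2)) *
        ∑ e : Equiv.Perm (Fin (ℓ + ℓ)),
          Real.cos (∑ j : Fin ℓ, (η (e (Fin.castAdd ℓ j)) - η (e (Fin.natAdd ℓ j)))) :=
  integral_prod_cos_even_general ℓ η
end

section
/- Let α > 0, μ > 0, r̂ > 0 and let k ≥ 0 be a real number. The k-th moment of the α-μ distribution satisfies ∫₀^∞ r^k · (α μ^μ r^{αμ−1} / (r̂^{αμ} Γ(μ))) · exp(−μ r^α / r̂^α) dr = r̂^k · Γ(μ + k/α) / (μ^{k/α} · Γ(μ)). -/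
/-!
Substituting `t = μ (r / r̂)^α` turns every moment of the α-μ density into a Gamma integral:
`r^k` times the density is a constant multiple of `r^(k + αμ - 1) exp(-(μ/r̂^α) r^α)`, whose
integral over `(0, ∞)` is Mathlib's `integral_rpow_mul_exp_neg_mul_rpow`.
-/

open Real MeasureTheory Set

theorem integral_rpow_mul_exp_neg_mul_rpow_div_rpow {p q b c : ℝ} (hp : 0 < p) (hq : -1 < q)
    (hb : 0 < b) (hc : 0 < c) :
    ∫ x in Ioi (0 : ℝ), x ^ q * exp (-(b * x ^ p / c ^ p)) =
      c ^ (q + 1) * Gamma ((q + 1) / p) / (p * b ^ ((q + 1) / p)) := by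
  have hbc : 0 < b / c ^ p := by positivity
  have h_exp : ∀ x : ℝ, -(b * x ^ p / c ^ p) = -(b / c ^ p) * x ^ p := fun x => by ring
  simp_rw [h_exp]
  rw [integral_rpow_mul_exp_neg_mul_rpow hp hq hbc, neg_div, rpow_neg hbc.le,
    div_rpow hb.le (by positivity), ← rpow_mul hc.le, mul_div_cancel₀ _ hp.ne']
  field_simp

theorem integral_rpow_mul_alphaMu_density {α μ rHat k : ℝ} (hα : 0 < α) (hμ : 0 < μ)
    (hr : 0 < rHat) (hk : -(α * μ) < k) :
    (∫ r in Ioi (0 : ℝ),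
        r ^ k * (α * μ ^ μ * r ^ (α * μ - 1) / (rHat ^ (α * μ) * Gamma μ)) *
          exp (-(μ * r ^ α / rHat ^ α))) =
      rHat ^ k * Gamma (μ + k / α) / (μ ^ (k / α) * Gamma μ) := by
  have h_integrand : ∀ r ∈ Ioi (0 : ℝ),
      r ^ k * (α * μ ^ μ * r ^ (α * μ - 1) / (rHat ^ (α * μ) * Gamma μ)) *
          exp (-(μ * r ^ α / rHat ^ α)) =
        α * μ ^ μ / (rHat ^ (α * μ) * Gamma μ) *
          (r ^ (k + α * μ - 1) * exp (-(μ * r ^ α / rHat ^ α))) := by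
    intro r hr
    rw [add_sub_assoc, rpow_add hr]
    ring
  have h_exponent : (k + α * μ) / α = μ + k / α := by
    field_simp
    ring
  rw [setIntegral_congr_fun measurableSet_Ioi h_integrand, integral_const_mul,
    integral_rpow_mul_exp_neg_mul_rpow_div_rpow hα (by linarith) hμ hr, sub_add_cancel,
    h_exponent, rpow_add hr, rpow_add hμ]
  have hΓ : Gamma μ ≠ 0 := (Gamma_pos_of_pos hμ).ne'
  field_simp

/-- The `k`-th moment of the α-μ distribution (eq. (20) of the paper).
`rHat` is the scale parameter `r̂`. -/
theorem alpha_mu_moment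
    (α μ rHat : ℝ) (hα : 0 < α) (hμ : 0 < μ) (hr : 0 < rHat)
    (k : ℝ) (hk : 0 ≤ k) :
    (∫ r in Set.Ioi (0 : ℝ),
        r ^ k * (α * μ ^ μ * r ^ (α * μ - 1) / (rHat ^ (α * μ) * Real.Gamma μ)) *
          Real.exp (-(μ * r ^ α / rHat ^ α))) =
      rHat ^ k * Real.Gamma (μ + k / α) / (μ ^ (k / α) * Real.Gamma μ) :=
  integral_rpow_mul_alphaMu_density hα hμ hr (by linarith [mul_pos hα hμ])
end

section
/- Let α > 0, μ > 0, r̂ > 0, and for k ∈ ℕ let m_k = ∫₀^∞ r^k · (α μ^μ r^{αμ−1} / (r̂^{αμ} Γ(μ))) · exp(−μ r^α / r̂^α) dr denote the k-th moment of the α-μ distribution. Then m₂² / (m₄ − m₂²) = Γ(μ + 2/α)² / (Γ(μ)·Γ(μ + 4/α) − Γ(μ + 2/α)²). -/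
open Real MeasureTheory

lemma alpha_mu_moment_aux
    (α μ rHat : ℝ) (hα : 0 < α) (hμ : 0 < μ) (hr : 0 < rHat) (k : ℕ) :
    (∫ r in Set.Ioi (0 : ℝ),
        r ^ k * (α * μ ^ μ * r ^ (α * μ - 1) / (rHat ^ (α * μ) * Real.Gamma μ)) *
          Real.exp (-(μ * r ^ α / rHat ^ α)))
      = rHat ^ (k : ℝ) * μ ^ (-((k : ℝ) / α)) * Real.Gamma (μ + k / α) / Real.Gamma μ := by
  have hΓ : 0 < Real.Gamma μ := Real.Gamma_pos_of_pos hμ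
  have hb : 0 < μ / rHat ^ α := div_pos hμ (Real.rpow_pos_of_pos hr α)
  have hq : (-1 : ℝ) < (k : ℝ) + α * μ - 1 := by
    have : 0 < α * μ := mul_pos hα hμ
    have : (0:ℝ) ≤ (k:ℝ) := Nat.cast_nonneg k
    linarith [mul_pos hα hμ]
  have key : (∫ r in Set.Ioi (0 : ℝ),
        r ^ k * (α * μ ^ μ * r ^ (α * μ - 1) / (rHat ^ (α * μ) * Real.Gamma μ)) *
          Real.exp (-(μ * r ^ α / rHat ^ α)))
      = (α * μ ^ μ / (rHat ^ (α * μ) * Real.Gamma μ)) *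
        ∫ r in Set.Ioi (0 : ℝ),
          r ^ ((k : ℝ) + α * μ - 1) * Real.exp (-(μ / rHat ^ α) * r ^ α) := by
    rw [← integral_const_mul]
    refine setIntegral_congr_fun measurableSet_Ioi (fun r hr' => ?_)
    have hr0 : (0 : ℝ) < r := hr'
    have h1 : r ^ k = r ^ ((k : ℝ)) := (Real.rpow_natCast r k).symm
    rw [h1, show -(μ * r ^ α / rHat ^ α) = -(μ / rHat ^ α) * r ^ α by ring,
      show (k : ℝ) + α * μ - 1 = (k : ℝ) + (α * μ - 1) by ring,
      Real.rpow_add hr0]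
    ring
  rw [key, integral_rpow_mul_exp_neg_mul_rpow hα hq hb]
  have he : ((k : ℝ) + α * μ - 1 + 1) / α = μ + k / α := by field_simp; ring
  rw [he]
  have hbe : (μ / rHat ^ α) ^ (-((k : ℝ) + α * μ - 1 + 1) / α)
      = μ ^ (-(μ + (k:ℝ)/α)) * rHat ^ (α * (μ + (k:ℝ)/α)) := by
    rw [neg_div, he, Real.div_rpow hμ.le (Real.rpow_pos_of_pos hr α).le,
      ← Real.rpow_mul hr.le,
      show α * -(μ + (k:ℝ)/α) = -(α * (μ + (k:ℝ)/α)) by ring,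
      Real.rpow_neg hr.le, div_eq_mul_inv, inv_inv]
  rw [hbe]
  have h2 : rHat ^ (α * (μ + (k:ℝ)/α)) = rHat ^ (α * μ) * rHat ^ ((k:ℝ)) := by
    rw [← Real.rpow_add hr]
    congr 1
    field_simp
  have h3 : μ ^ μ * μ ^ (-(μ + (k:ℝ)/α)) = μ ^ (-((k:ℝ)/α)) := by
    rw [← Real.rpow_add hμ]
    congr 1
    ring
  rw [h2, ← h3]
  have hRμ : rHat ^ (α * μ) ≠ 0 := (Real.rpow_pos_of_pos hr _).ne'
  set a := μ ^ (-(μ + (k:ℝ)/α)) with ha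
  set b := rHat ^ (α * μ) with hbb
  set c := rHat ^ ((k:ℝ)) with hc
  set d := μ ^ μ with hd
  set g := Real.Gamma (μ + (k:ℝ)/α) with hg
  field_simp


/-- Second moment-based estimator equation for the α-μ distribution
(eq. (23) of the paper): the ratio `m₂²/(m₄ - m₂²)` of its moments depends
only on `α` and `μ`. `rHat` is the scale parameter `r̂`. -/
theorem alpha_mu_moment_estimator_second
    (α μ rHat : ℝ) (hα : 0 < α) (hμ : 0 < μ) (hr : 0 < rHat)
    (m : ℕ → ℝ)
    (hm : ∀ k : ℕ, m k =
      ∫ r in Set.Ioi (0 : ℝ),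
        r ^ k * (α * μ ^ μ * r ^ (α * μ - 1) / (rHat ^ (α * μ) * Real.Gamma μ)) *
          Real.exp (-(μ * r ^ α / rHat ^ α))) :
    (m 2) ^ 2 / (m 4 - (m 2) ^ 2) =
      Real.Gamma (μ + 2 / α) ^ 2 /
        (Real.Gamma μ * Real.Gamma (μ + 4 / α) - Real.Gamma (μ + 2 / α) ^ 2) := by
  have hΓ : 0 < Real.Gamma μ := Real.Gamma_pos_of_pos hμ
  have e2 : m 2 = rHat ^ ((2:ℝ)) * μ ^ (-((2:ℝ) / α)) * Real.Gamma (μ + 2 / α) / Real.Gamma μ := by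
    rw [hm 2, alpha_mu_moment_aux α μ rHat hα hμ hr 2]
    norm_num
  have e4 : m 4 = rHat ^ ((4:ℝ)) * μ ^ (-((4:ℝ) / α)) * Real.Gamma (μ + 4 / α) / Real.Gamma μ := by
    rw [hm 4, alpha_mu_moment_aux α μ rHat hα hμ hr 4]
    norm_num
  have hr4 : rHat ^ ((2:ℝ)) * rHat ^ ((2:ℝ)) = rHat ^ ((4:ℝ)) := by
    rw [← Real.rpow_add hr]; norm_num
  have hμ4 : μ ^ (-((2:ℝ)/α)) * μ ^ (-((2:ℝ)/α)) = μ ^ (-((4:ℝ)/α)) := by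
    rw [← Real.rpow_add hμ]; congr 1; ring
  set C : ℝ := rHat ^ ((4:ℝ)) * μ ^ (-((4:ℝ)/α)) / Real.Gamma μ ^ 2 with hC
  have hCpos : 0 < C := by
    apply div_pos (mul_pos (Real.rpow_pos_of_pos hr _) (Real.rpow_pos_of_pos hμ _))
    positivity
  have q2 : (m 2) ^ 2 = C * Real.Gamma (μ + 2 / α) ^ 2 := by
    rw [e2, hC, ← hr4, ← hμ4]
    field_simp
  have q4 : m 4 - (m 2) ^ 2 = C * (Real.Gamma μ * Real.Gamma (μ + 4 / α) - Real.Gamma (μ + 2 / α) ^ 2) := by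
    rw [q2, e4, hC]
    have : Real.Gamma μ ≠ 0 := hΓ.ne'
    field_simp
  rw [q4, q2, mul_div_mul_left _ _ hCpos.ne']
end

section
/- Let w > 0, A₀ > 0, σ > 0, and let d ∈ ℝ² have the centered bivariate Gaussian density g(d) = (1/(2πσ²))·exp(−‖d‖²/(2σ²)). Then for the zero-boresight pointing loss Z = A₀·exp(−2‖d‖²/w²) and every z₀ with 0 < z₀ ≤ A₀, ∫_{{d ∈ ℝ² : A₀ exp(−2‖d‖²/w²) ≤ z₀}} g(d) dd = (z₀/A₀)^{w²/(4σ²)}. -/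
/-!
In polar coordinates `r² = ‖d‖²` is exponentially distributed with mean `2σ²`, so the probability
that `‖d‖² ≥ c` is `exp (-c / (2σ²))`. The event `Z ≤ z₀` is exactly `‖d‖² ≥ (w²/2) log (A₀/z₀)`,
and substituting this threshold gives `(z₀/A₀)^(w²/(4σ²))`.
-/

open Real MeasureTheory Set

theorem integral_comp_sq_add_sq_eq_polar (f : ℝ → ℝ) :
    ∫ p : ℝ × ℝ, f (p.1 ^ 2 + p.2 ^ 2) = 2 * π * ∫ r in Ioi (0 : ℝ), r * f (r ^ 2) := by
  have hsq (p : ℝ × ℝ) : (p.1 * cos p.2) ^ 2 + (p.1 * sin p.2) ^ 2 = p.1 ^ 2 := by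
    linear_combination p.1 ^ 2 * sin_sq_add_cos_sq p.2
  have hangle : ∫ _ in Ioo (-π) π, (1 : ℝ) = 2 * π := by
    rw [setIntegral_const, smul_eq_mul, mul_one, volume_real_Ioo,
      max_eq_left (by linarith [pi_pos])]
    ring
  rw [← integral_comp_polarCoord_symm, polarCoord_target, Measure.volume_eq_prod]
  simpa [polarCoord_symm_apply, hsq, hangle, mul_comm] using
    setIntegral_prod_mul (μ := volume) (ν := volume) (fun r ↦ r * f (r ^ 2)) (fun _ ↦ (1 : ℝ))
      (Ioi 0) (Ioo (-π) π)

theorem integral_Ioi_mul_comp_sq (f : ℝ → ℝ) :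
    ∫ r in Ioi (0 : ℝ), r * f (r ^ 2) = (1 / 2) * ∫ t in Ioi (0 : ℝ), f t := by
  conv_rhs => rw [← integral_comp_rpow_Ioi_of_pos two_pos, ← integral_const_mul]
  refine setIntegral_congr_fun measurableSet_Ioi fun r _ ↦ ?_
  norm_num [rpow_two]
  ring

theorem integral_comp_sq_add_sq (f : ℝ → ℝ) :
    ∫ p : ℝ × ℝ, f (p.1 ^ 2 + p.2 ^ 2) = π * ∫ t in Ioi (0 : ℝ), f t := by
  rw [integral_comp_sq_add_sq_eq_polar, integral_Ioi_mul_comp_sq]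
  ring

theorem integral_exp_neg_div_Ioi {s : ℝ} (hs : 0 < s) (c : ℝ) :
    ∫ t in Ioi c, exp (-t / s) = s * exp (-c / s) := by
  have h := integral_exp_mul_Ioi (neg_lt_zero.2 (inv_pos.2 hs)) c
  simp only [neg_mul, ← neg_div, inv_mul_eq_div] at h
  rw [h]
  field_simp

theorem integral_gaussian_density_of_le_sq_add_sq {σ c : ℝ} (hσ : σ ≠ 0) (hc : 0 ≤ c) :
    ∫ d in {d : ℝ × ℝ | c ≤ d.1 ^ 2 + d.2 ^ 2},
        (1 / (2 * π * σ ^ 2)) * exp (-(d.1 ^ 2 + d.2 ^ 2) / (2 * σ ^ 2)) =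
      exp (-c / (2 * σ ^ 2)) := by
  set q : ℝ × ℝ → ℝ := fun d ↦ d.1 ^ 2 + d.2 ^ 2
  set g : ℝ → ℝ := fun t ↦ (1 / (2 * π * σ ^ 2)) * exp (-t / (2 * σ ^ 2))
  have hq : Measurable q := by fun_prop
  have hσ2 : 0 < 2 * σ ^ 2 := by positivity
  calc ∫ d in q ⁻¹' Ici c, g (q d)
      = ∫ d, (Ici c).indicator g (q d) := by
        rw [← integral_indicator (hq measurableSet_Ici)]; rfl
    _ = π * ∫ t in Ici c, g t := by
        rw [integral_comp_sq_add_sq, ← integral_Ici_eq_integral_Ioi,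
          setIntegral_indicator measurableSet_Ici, Ici_inter_Ici, max_eq_right hc]
    _ = exp (-c / (2 * σ ^ 2)) := by
        rw [integral_Ici_eq_integral_Ioi, integral_const_mul, integral_exp_neg_div_Ioi hσ2]
        field_simp [pi_ne_zero]

theorem mul_exp_neg_le_iff {A z w t : ℝ} (hA : 0 < A) (hz : 0 < z) (hw : w ≠ 0) :
    A * exp (-(2 * t) / w ^ 2) ≤ z ↔ w ^ 2 / 2 * log (A / z) ≤ t := by
  have hlog : log (z / A) = -log (A / z) := by rw [← log_inv, inv_div]
  rw [mul_comm, ← le_div_iff₀ hA, ← le_log_iff_exp_le (div_pos hz hA), hlog,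
    div_le_iff₀ (by positivity)]
  constructor <;> intro h <;> nlinarith

/-- The zero-boresight pointing loss `Z = A₀ exp(-2‖d‖²/w²)` under a centered
Gaussian beam displacement `d` has CDF `(z₀/A₀)^{w²/(4σ²)}`. -/
theorem zero_boresight_pointing_loss_cdf
    (w A₀ σ : ℝ) (hw : 0 < w) (hA : 0 < A₀) (hσ : 0 < σ)
    (z₀ : ℝ) (hz₀ : 0 < z₀) (hz₀A : z₀ ≤ A₀) :
    (∫ d in {d : ℝ × ℝ | A₀ * Real.exp (-(2 * (d.1 ^ 2 + d.2 ^ 2)) / w ^ 2) ≤ z₀},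
        (1 / (2 * π * σ ^ 2)) * Real.exp (-(d.1 ^ 2 + d.2 ^ 2) / (2 * σ ^ 2))) =
      (z₀ / A₀) ^ (w ^ 2 / (4 * σ ^ 2)) := by
  have hc : 0 ≤ w ^ 2 / 2 * log (A₀ / z₀) :=
    mul_nonneg (by positivity) (log_nonneg ((one_le_div hz₀).2 hz₀A))
  have hset : {d : ℝ × ℝ | A₀ * exp (-(2 * (d.1 ^ 2 + d.2 ^ 2)) / w ^ 2) ≤ z₀} =
      {d | w ^ 2 / 2 * log (A₀ / z₀) ≤ d.1 ^ 2 + d.2 ^ 2} := by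
    ext d
    exact mul_exp_neg_le_iff hA hz₀ hw.ne'
  rw [hset, integral_gaussian_density_of_le_sq_add_sq hσ.ne' hc,
    rpow_def_of_pos (div_pos hz₀ hA), ← inv_div A₀, log_inv]
  congr 1
  field_simp
  ring
end

section
/- Let n ≥ 1, w > 0, A₀ > 0, σ > 0, and s ∈ ℝ². Then the n-th moment of a single pointing loss under Gaussian beam displacement has the closed form ∫_{ℝ²} (A₀ exp(−2‖s+d‖²/w²))^n · (1/(2πσ²)) exp(−‖d‖²/(2σ²)) dd = A₀^n · (w² / (w² + 4nσ²)) · exp(−2n‖s‖² / (w² + 4nσ²)). -/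
open Real MeasureTheory

lemma gauss1d {a b : ℝ} (ha : 0 < a) (hb : 0 < b) (s : ℝ) :
    ∫ x : ℝ, Real.exp (-(a * (s + x) ^ 2) - b * x ^ 2) =
      Real.sqrt (π / (a + b)) * Real.exp (-(a * b * s ^ 2 / (a + b))) := by
  have hab : 0 < a + b := by linarith
  have hc : ∀ x : ℝ, -(a * (s + x) ^ 2) - b * x ^ 2 =
      -((a + b) * (x + a * s / (a + b)) ^ 2) + -(a * b * s ^ 2 / (a + b)) := by
    intro x; field_simp; ring
  calc ∫ x : ℝ, Real.exp (-(a * (s + x) ^ 2) - b * x ^ 2)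
      = ∫ x : ℝ, Real.exp (-((a + b) * (x + a * s / (a + b)) ^ 2)) *
          Real.exp (-(a * b * s ^ 2 / (a + b))) := by
        congr 1; funext x; rw [← Real.exp_add, hc x]
    _ = (∫ x : ℝ, Real.exp (-((a + b) * (x + a * s / (a + b)) ^ 2))) *
          Real.exp (-(a * b * s ^ 2 / (a + b))) := by
        rw [integral_mul_const]
    _ = Real.sqrt (π / (a + b)) * Real.exp (-(a * b * s ^ 2 / (a + b))) := by
        rw [integral_add_right_eq_self (fun x => Real.exp (-((a + b) * x ^ 2)))]
        congr 1
        simp_rw [← neg_mul]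
        exact integral_gaussian (a + b)

/-- Closed form for the `n`-th moment of a single Gaussian-beam pointing loss
with boresight displacement `s`, under a centered Gaussian beam displacement. -/
theorem single_pointing_loss_moment
    (n : ℕ) (hn : 1 ≤ n) (w A₀ σ : ℝ) (hw : 0 < w) (hA : 0 < A₀) (hσ : 0 < σ)
    (s : ℝ × ℝ) :
    (∫ d : ℝ × ℝ,
        (A₀ * Real.exp (-(2 * ((s.1 + d.1) ^ 2 + (s.2 + d.2) ^ 2)) / w ^ 2)) ^ n *
          ((1 / (2 * π * σ ^ 2)) * Real.exp (-(d.1 ^ 2 + d.2 ^ 2) / (2 * σ ^ 2)))) =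
      A₀ ^ n * (w ^ 2 / (w ^ 2 + 4 * n * σ ^ 2)) *
        Real.exp (-2 * n * (s.1 ^ 2 + s.2 ^ 2) / (w ^ 2 + 4 * n * σ ^ 2)) := by
  have hn1 : (1 : ℝ) ≤ (n : ℝ) := by exact_mod_cast hn
  have hnpos : (0 : ℝ) < (n : ℝ) := by linarith
  set a : ℝ := 2 * n / w ^ 2 with ha_def
  set b : ℝ := 1 / (2 * σ ^ 2) with hb_def
  have ha : 0 < a := by positivity
  have hb : 0 < b := by positivity
  have hab : 0 < a + b := by linarith
  have hw2 : (0:ℝ) < w ^ 2 := by positivity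
  have hσ2 : (0:ℝ) < σ ^ 2 := by positivity
  have hden : (0:ℝ) < w ^ 2 + 4 * n * σ ^ 2 := by positivity
  set C : ℝ := A₀ ^ n * (1 / (2 * π * σ ^ 2)) with hC_def
  have key : ∀ d : ℝ × ℝ,
      (A₀ * Real.exp (-(2 * ((s.1 + d.1) ^ 2 + (s.2 + d.2) ^ 2)) / w ^ 2)) ^ n *
          ((1 / (2 * π * σ ^ 2)) * Real.exp (-(d.1 ^ 2 + d.2 ^ 2) / (2 * σ ^ 2))) =
      C * (Real.exp (-(a * (s.1 + d.1) ^ 2) - b * d.1 ^ 2) *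
           Real.exp (-(a * (s.2 + d.2) ^ 2) - b * d.2 ^ 2)) := by
    intro d
    rw [mul_pow, ← Real.exp_nat_mul, mul_mul_mul_comm, ← Real.exp_add, ← Real.exp_add, hC_def]
    congr 1
    rw [Real.exp_eq_exp, ha_def, hb_def]
    field_simp
    ring
  simp_rw [key]
  rw [integral_const_mul, Measure.volume_eq_prod,
    integral_prod_mul (fun x => Real.exp (-(a * (s.1 + x) ^ 2) - b * x ^ 2))
      (fun y => Real.exp (-(a * (s.2 + y) ^ 2) - b * y ^ 2)),
    gauss1d ha hb s.1, gauss1d ha hb s.2]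
  have hsqrt : Real.sqrt (π / (a + b)) * Real.sqrt (π / (a + b)) = π / (a + b) :=
    Real.mul_self_sqrt (by positivity)
  rw [show (Real.sqrt (π / (a + b)) * Real.exp (-(a * b * s.1 ^ 2 / (a + b)))) *
        (Real.sqrt (π / (a + b)) * Real.exp (-(a * b * s.2 ^ 2 / (a + b)))) =
      (Real.sqrt (π / (a + b)) * Real.sqrt (π / (a + b))) *
        (Real.exp (-(a * b * s.1 ^ 2 / (a + b))) * Real.exp (-(a * b * s.2 ^ 2 / (a + b)))) by ring,
    hsqrt, ← Real.exp_add]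
  have hexp : -(a * b * s.1 ^ 2 / (a + b)) + -(a * b * s.2 ^ 2 / (a + b)) =
      -2 * n * (s.1 ^ 2 + s.2 ^ 2) / (w ^ 2 + 4 * n * σ ^ 2) := by
    rw [ha_def, hb_def]
    field_simp
    ring
  rw [hexp, hC_def]
  have hcoef : A₀ ^ n * (1 / (2 * π * σ ^ 2)) * (π / (a + b)) =
      A₀ ^ n * (w ^ 2 / (w ^ 2 + 4 * n * σ ^ 2)) := by
    rw [ha_def, hb_def]
    have hπ : (0:ℝ) < π := Real.pi_pos
    field_simp
    ring
  rw [← mul_assoc, hcoef]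
end
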